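/- arXiv:math/9803054 — 5 statements merged into one kernel-verified Lean document; each statement's English description precedes it below -/
import Mathlib

section
/- Let V be a finite-dimensional real vector space, Q a symmetric bilinear form on V, e an element of V, and e₁, …, eₙ a basis of V satisfying: (i) writing e = a₁e₁ + ⋯ + aₙeₙ, one has aᵢ > 0 for all i; (ii) Q(x, e) ≤ 0 for all x ∈ V; (iii) Q(eᵢ, eⱼ) ≥ 0 for all i ≠ j; (iv) for any i ≠ j there is a finite sequence i₁, …, i_l with i₁ = i, i_l = j and Q(e_{i_t}, e_{i_{t+1}}) > 0 for all 1 ≤ t < l. Then Q(x, x) ≤ 0 for all x ∈ V. -/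
/-!
Writing `e = ∑ aᵢ eᵢ`, `x = ∑ tᵢ aᵢ eᵢ` (possible as `aᵢ > 0`) and `M = (Q(eᵢ, eⱼ))`, symmetry of `M` gives the identity
`Q(x, x) = ∑ᵢ aᵢ tᵢ² Q(eᵢ, e) - ½ ∑ᵢⱼ aᵢ aⱼ Mᵢⱼ (tᵢ - tⱼ)²`.
The first sum is `≤ 0` because `Q(·, e) ≤ 0`, and the second is `≥ 0` because only the
off-diagonal entries `Mᵢⱼ ≥ 0` contribute to it.
-/

open Matrix Finset LinearMap

theorem Matrix.IsSymm.two_mul_dotProduct_mulVec_eq {R ι : Type*} [CommRing R] [Fintype ι]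
    {M : Matrix ι ι R} (hM : M.IsSymm) (a t : ι → R) :
    2 * ((a * t) ⬝ᵥ M *ᵥ (a * t)) =
      2 * ∑ i, a i * t i ^ 2 * (M *ᵥ a) i - ∑ i, ∑ j, a i * a j * M i j * (t i - t j) ^ 2 := by
  have hswap : ∑ i, ∑ j, a i * a j * M i j * t j ^ 2 = ∑ i, ∑ j, a i * a j * M i j * t i ^ 2 := by
    rw [sum_comm]
    refine sum_congr rfl fun i _ => sum_congr rfl fun j _ => ?_
    rw [hM.apply i j]
    ring
  have hexpand : ∀ i j, a i * a j * M i j * (t i - t j) ^ 2 = a i * a j * M i j * t i ^ 2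
      + a i * a j * M i j * t j ^ 2 - 2 * (a i * t i * (M i j * (a j * t j))) :=
    fun i j => by ring
  have hdiag : ∑ i, a i * t i ^ 2 * (M *ᵥ a) i = ∑ i, ∑ j, a i * a j * M i j * t i ^ 2 := by
    simp only [mulVec, dotProduct, mul_sum]
    exact sum_congr rfl fun i _ => sum_congr rfl fun j _ => by ring
  have hbilin : (a * t) ⬝ᵥ M *ᵥ (a * t) = ∑ i, ∑ j, a i * t i * (M i j * (a j * t j)) := by
    simp only [mulVec, dotProduct, mul_sum, Pi.mul_apply]
  simp only [hdiag, hbilin, hexpand, sum_add_distrib, sum_sub_distrib, hswap, ← mul_sum]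
  ring

theorem Matrix.IsSymm.dotProduct_mulVec_self_nonpos {R ι : Type*} [Field R] [LinearOrder R]
    [IsStrictOrderedRing R] [Fintype ι] {M : Matrix ι ι R} (hM : M.IsSymm)
    (hoff : ∀ i j, i ≠ j → 0 ≤ M i j) {a : ι → R} (ha : ∀ i, 0 < a i) (hMa : M *ᵥ a ≤ 0)
    (c : ι → R) : c ⬝ᵥ M *ᵥ c ≤ 0 := by
  obtain ⟨t, rfl⟩ : ∃ t, c = a * t :=
    ⟨fun i => c i / a i, funext fun i => (mul_div_cancel₀ (c i) (ha i).ne').symm⟩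
  have hfirst : ∑ i, a i * t i ^ 2 * (M *ᵥ a) i ≤ 0 :=
    sum_nonpos fun i _ => mul_nonpos_of_nonneg_of_nonpos (by have := ha i; positivity) (hMa i)
  have hsecond : 0 ≤ ∑ i, ∑ j, a i * a j * M i j * (t i - t j) ^ 2 := by
    refine sum_nonneg fun i _ => sum_nonneg fun j _ => ?_
    rcases eq_or_ne i j with rfl | hij
    · simp
    · have := hoff i j hij
      have := ha i
      have := ha j
      positivity
  linarith [hM.two_mul_dotProduct_mulVec_eq a t]

theorem stmt0_general {V : Type*} [AddCommGroup V] [Module ℝ V]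
    (Q : V →ₗ[ℝ] V →ₗ[ℝ] ℝ) (hQsymm : ∀ x y, Q x y = Q y x)
    {n : ℕ} (b : Module.Basis (Fin n) ℝ V) (e : V)
    (hpos : ∀ i, 0 < b.repr e i)
    (hneg : ∀ x, Q x e ≤ 0)
    (hnonneg : ∀ i j : Fin n, i ≠ j → 0 ≤ Q (b i) (b j)) :
    ∀ x : V, Q x x ≤ 0 := by
  intro x
  have hQ (y z : V) : Q y z = b.repr y ⬝ᵥ toMatrix₂ b b Q *ᵥ b.repr z :=
    apply_eq_dotProduct_toMatrix₂_mulVec b b Q y z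
  rw [hQ]
  refine IsSymm.dotProduct_mulVec_self_nonpos (.ext fun i j => ?_) (fun i j hij => ?_) hpos
    (fun i => ?_) _
  · simp [hQsymm]
  · simpa using hnonneg i j hij
  · simpa [hQ, Finsupp.single_eq_pi_single] using hneg (b i)

/-- Sublemma in Appendix B (Zariski's lemma): a symmetric bilinear form satisfying the
connectedness/positivity conditions with respect to a basis is negative semi-definite. -/
theorem stmt0 {V : Type*} [AddCommGroup V] [Module ℝ V] [FiniteDimensional ℝ V]
    (Q : V →ₗ[ℝ] V →ₗ[ℝ] ℝ) (hQsymm : ∀ x y, Q x y = Q y x)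
    {n : ℕ} (b : Module.Basis (Fin n) ℝ V) (e : V)
    (hpos : ∀ i, 0 < b.repr e i)
    (hneg : ∀ x, Q x e ≤ 0)
    (hnonneg : ∀ i j : Fin n, i ≠ j → 0 ≤ Q (b i) (b j))
    (hconn : ∀ i j : Fin n, i ≠ j → ∃ l : ℕ, ∃ c : Fin (l + 1) → Fin n,
      c 0 = i ∧ c (Fin.last l) = j ∧
      ∀ t : Fin l, 0 < Q (b (c t.castSucc)) (b (c t.succ))) :
    ∀ x : V, Q x x ≤ 0 :=
  stmt0_general Q hQsymm b e hpos hneg hnonneg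
end

section
/- Let V be a finite-dimensional real vector space, Q a symmetric bilinear form on V, e an element of V, and e₁, …, eₙ a basis of V satisfying: (i) writing e = a₁e₁ + ⋯ + aₙeₙ, one has aᵢ > 0 for all i; (ii) Q(x, e) ≤ 0 for all x ∈ V; (iii) Q(eᵢ, eⱼ) ≥ 0 for all i ≠ j; (iv) for any i ≠ j there is a finite sequence i₁, …, i_l with i₁ = i, i_l = j and Q(e_{i_t}, e_{i_{t+1}}) > 0 for all 1 ≤ t < l. If x ∈ V, x ≠ 0 and Q(x, x) = 0, then there is c ∈ ℝ with x = c • e, and moreover Q(y, e) = 0 for all y ∈ V. -/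
/-!
Rescale the basis to `wᵢ = aᵢ eᵢ`, so that `e = ∑ wᵢ`, and write `x = ∑ tᵢ wᵢ`. For symmetric `Q`,
`Q(x, x) = ∑ tᵢ² Q(wᵢ, e) - ½ ∑ᵢⱼ (tᵢ - tⱼ)² Q(wᵢ, wⱼ)`,
and under the sign hypotheses both sums have the sign that makes `Q(x, x) ≤ 0`. If `Q(x, x) = 0`,
every term vanishes: `t` is constant along the edges `Q(eᵢ, eⱼ) > 0`, hence constant by
connectivity, so `x` is a multiple `r e`; and `r ≠ 0` forces `Q(wᵢ, e) = 0` for all `i`.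
-/

open Finset

theorem LinearMap.apply_sum_smul_self_eq {ι V : Type*} [Fintype ι] [AddCommGroup V] [Module ℝ V]
    (Q : V →ₗ[ℝ] V →ₗ[ℝ] ℝ) (hQ : ∀ x y, Q x y = Q y x) (w : ι → V) (t : ι → ℝ) :
    Q (∑ i, t i • w i) (∑ i, t i • w i) =
      ∑ i, t i ^ 2 * Q (w i) (∑ j, w j) - (∑ i, ∑ j, (t i - t j) ^ 2 * Q (w i) (w j)) / 2 := by
  have hexpand : Q (∑ i, t i • w i) (∑ i, t i • w i) = ∑ i, ∑ j, t i * t j * Q (w i) (w j) := by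
    simp only [map_sum, map_smul, LinearMap.sum_apply, LinearMap.smul_apply, smul_eq_mul, mul_sum]
    rw [sum_comm]
    exact sum_congr rfl fun i _ => sum_congr rfl fun j _ => by ring
  have hswap : ∑ i, ∑ j, t j ^ 2 * Q (w i) (w j) = ∑ i, ∑ j, t i ^ 2 * Q (w i) (w j) := by
    rw [sum_comm]
    exact sum_congr rfl fun i _ => sum_congr rfl fun j _ => by rw [hQ]
  have hsq : ∑ i, ∑ j, (t i - t j) ^ 2 * Q (w i) (w j) = ∑ i, ∑ j, t i ^ 2 * Q (w i) (w j) +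
      ∑ i, ∑ j, t j ^ 2 * Q (w i) (w j) - 2 * ∑ i, ∑ j, t i * t j * Q (w i) (w j) := by
    simp only [mul_sum, ← sum_add_distrib, ← sum_sub_distrib]
    exact sum_congr rfl fun i _ => sum_congr rfl fun j _ => by ring
  have hrow : ∑ i, t i ^ 2 * Q (w i) (∑ j, w j) = ∑ i, ∑ j, t i ^ 2 * Q (w i) (w j) := by
    simp only [map_sum, mul_sum]
  rw [hexpand, hsq, hswap, hrow]
  ring

theorem LinearMap.sq_mul_apply_eq_zero_of_apply_sum_smul_self_eq_zero {ι V : Type*} [Fintype ι]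
    [AddCommGroup V] [Module ℝ V] (Q : V →ₗ[ℝ] V →ₗ[ℝ] ℝ) (hQ : ∀ x y, Q x y = Q y x)
    (w : ι → V) (t : ι → ℝ) (hneg : ∀ i, Q (w i) (∑ j, w j) ≤ 0)
    (hnonneg : ∀ i j, i ≠ j → 0 ≤ Q (w i) (w j))
    (h : Q (∑ i, t i • w i) (∑ i, t i • w i) = 0) :
    (∀ i, t i ^ 2 * Q (w i) (∑ j, w j) = 0) ∧ ∀ i j, (t i - t j) ^ 2 * Q (w i) (w j) = 0 := by
  have hrow : ∀ i, t i ^ 2 * Q (w i) (∑ j, w j) ≤ 0 := fun i =>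
    mul_nonpos_of_nonneg_of_nonpos (sq_nonneg _) (hneg i)
  have hedge : ∀ i j, 0 ≤ (t i - t j) ^ 2 * Q (w i) (w j) := by
    intro i j
    rcases eq_or_ne i j with rfl | hij
    · simp
    · exact mul_nonneg (sq_nonneg _) (hnonneg i j hij)
  have hS : ∑ i, t i ^ 2 * Q (w i) (∑ j, w j) ≤ 0 := sum_nonpos fun i _ => hrow i
  have hD : 0 ≤ ∑ i, ∑ j, (t i - t j) ^ 2 * Q (w i) (w j) :=
    sum_nonneg fun i _ => sum_nonneg fun j _ => hedge i j
  rw [Q.apply_sum_smul_self_eq hQ] at h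
  refine ⟨fun i => (sum_eq_zero_iff_of_nonpos fun i _ => hrow i).1 (by linarith) i (mem_univ i),
    fun i j => ?_⟩
  have hi := (sum_eq_zero_iff_of_nonneg fun i _ => sum_nonneg fun j _ => hedge i j).1
    (by linarith) i (mem_univ i)
  exact (sum_eq_zero_iff_of_nonneg fun j _ => hedge i j).1 hi j (mem_univ j)

theorem apply_eq_apply_of_chain {ι α : Type*} {R : ι → ι → Prop} {f : ι → α}
    (hf : ∀ i j, R i j → f i = f j)
    (hconn : ∀ i j, i ≠ j → ∃ l : ℕ, ∃ c : Fin (l + 1) → ι,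
      c 0 = i ∧ c (Fin.last l) = j ∧ ∀ k : Fin l, R (c k.castSucc) (c k.succ))
    (i j : ι) : f i = f j := by
  rcases eq_or_ne i j with rfl | hij
  · rfl
  obtain ⟨l, c, rfl, rfl, hc⟩ := hconn i j hij
  suffices ∀ k, f (c 0) = f (c k) from this _
  intro k
  induction k using Fin.induction with
  | zero => rfl
  | succ k ih => exact ih.trans (hf _ _ (hc k))

theorem LinearMap.const_coeff_of_apply_sum_smul_self_eq_zero {ι V : Type*} [Fintype ι]
    [AddCommGroup V] [Module ℝ V] (Q : V →ₗ[ℝ] V →ₗ[ℝ] ℝ) (hQ : ∀ x y, Q x y = Q y x)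
    (w : ι → V) (hneg : ∀ i, Q (w i) (∑ j, w j) ≤ 0)
    (hnonneg : ∀ i j, i ≠ j → 0 ≤ Q (w i) (w j))
    (hconn : ∀ i j, i ≠ j → ∃ l : ℕ, ∃ c : Fin (l + 1) → ι, c 0 = i ∧ c (Fin.last l) = j ∧
      ∀ k : Fin l, 0 < Q (w (c k.castSucc)) (w (c k.succ)))
    (t : ι → ℝ) (h : Q (∑ i, t i • w i) (∑ i, t i • w i) = 0) :
    (∀ i j, t i = t j) ∧ (t ≠ 0 → ∀ i, Q (w i) (∑ j, w j) = 0) := by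
  obtain ⟨hrow, hedge⟩ :=
    Q.sq_mul_apply_eq_zero_of_apply_sum_smul_self_eq_zero hQ w t hneg hnonneg h
  have ht : ∀ i j, t i = t j := by
    refine apply_eq_apply_of_chain (R := fun i j => 0 < Q (w i) (w j)) (fun i j hQij => ?_) hconn
    have hsq := (mul_eq_zero.1 (hedge i j)).resolve_right hQij.ne'
    exact sub_eq_zero.1 (pow_eq_zero_iff two_ne_zero |>.1 hsq)
  refine ⟨ht, fun ht0 i => ?_⟩
  obtain ⟨k, hk⟩ := Function.ne_iff.1 ht0
  have hi := hrow i
  rw [ht i k] at hi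
  exact (mul_eq_zero.1 hi).resolve_left (pow_ne_zero 2 hk)

theorem stmt1_general {V : Type*} [AddCommGroup V] [Module ℝ V]
    (Q : V →ₗ[ℝ] V →ₗ[ℝ] ℝ) (hQsymm : ∀ x y, Q x y = Q y x)
    {n : ℕ} (b : Module.Basis (Fin n) ℝ V) (e : V)
    (hpos : ∀ i, 0 < b.repr e i)
    (hneg : ∀ x, Q x e ≤ 0)
    (hnonneg : ∀ i j : Fin n, i ≠ j → 0 ≤ Q (b i) (b j))
    (hconn : ∀ i j : Fin n, i ≠ j → ∃ l : ℕ, ∃ c : Fin (l + 1) → Fin n,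
      c 0 = i ∧ c (Fin.last l) = j ∧
      ∀ t : Fin l, 0 < Q (b (c t.castSucc)) (b (c t.succ)))
    (x : V) (hx : x ≠ 0) (hxx : Q x x = 0) :
    (∃ c : ℝ, x = c • e) ∧ ∀ y : V, Q y e = 0 := by
  set a := b.repr e
  have ha : ∀ i, a i ≠ 0 := fun i => (hpos i).ne'
  set w : Fin n → V := fun i => a i • b i
  set t : Fin n → ℝ := fun i => b.repr x i / a i
  have hw : ∑ i, w i = e := b.sum_repr e
  have htw : ∑ i, t i • w i = x := by
    simp only [w, t, smul_smul, div_mul_cancel₀ _ (ha _)]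
    exact b.sum_repr x
  have hQw : ∀ i j, Q (w i) (w j) = a i * a j * Q (b i) (b j) := by
    intro i j
    simp only [w, map_smul, LinearMap.smul_apply, smul_eq_mul]
    ring
  have hQwe : ∀ i, Q (w i) e = a i * Q (b i) e := by simp [w]
  have hQw_pos : ∀ i j, 0 < Q (b i) (b j) → 0 < Q (w i) (w j) := fun i j hij => by
    rw [hQw]; exact mul_pos (mul_pos (hpos i) (hpos j)) hij
  obtain ⟨ht, hrad⟩ := Q.const_coeff_of_apply_sum_smul_self_eq_zero hQsymm w
    (fun i => by rw [hw, hQwe]; exact mul_nonpos_of_nonneg_of_nonpos (hpos i).le (hneg _))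
    (fun i j hij => by
      rw [hQw]; exact mul_nonneg (mul_nonneg (hpos i).le (hpos j).le) (hnonneg i j hij))
    (fun i j hij => by
      obtain ⟨l, c, h0, hl, hc⟩ := hconn i j hij
      exact ⟨l, c, h0, hl, fun k => hQw_pos _ _ (hc k)⟩)
    t (by rw [htw, hxx])
  obtain ⟨i₀, hi₀⟩ := Finsupp.ne_iff.1 (b.repr.map_ne_zero_iff.2 hx)
  have ht0 : t ≠ 0 := fun h => div_ne_zero hi₀ (ha i₀) (congr_fun h i₀)
  have hbe : Q.flip e = 0 := b.ext fun i => by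
    have hi := hrad ht0 i
    rw [hw, hQwe] at hi
    simpa [ha i] using hi
  refine ⟨⟨t i₀, ?_⟩, fun y => LinearMap.congr_fun hbe y⟩
  rw [← htw, ← hw, smul_sum]
  exact sum_congr rfl fun i _ => by rw [ht i i₀]

/-- Sublemma in Appendix B (Zariski's lemma), equality case: if `Q x x = 0` for some
nonzero `x`, then `x` is proportional to `e` and `e` is in the radical of `Q`. -/
theorem stmt1 {V : Type*} [AddCommGroup V] [Module ℝ V] [FiniteDimensional ℝ V]
    (Q : V →ₗ[ℝ] V →ₗ[ℝ] ℝ) (hQsymm : ∀ x y, Q x y = Q y x)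
    {n : ℕ} (b : Module.Basis (Fin n) ℝ V) (e : V)
    (hpos : ∀ i, 0 < b.repr e i)
    (hneg : ∀ x, Q x e ≤ 0)
    (hnonneg : ∀ i j : Fin n, i ≠ j → 0 ≤ Q (b i) (b j))
    (hconn : ∀ i j : Fin n, i ≠ j → ∃ l : ℕ, ∃ c : Fin (l + 1) → Fin n,
      c 0 = i ∧ c (Fin.last l) = j ∧
      ∀ t : Fin l, 0 < Q (b (c t.castSucc)) (b (c t.succ)))
    (x : V) (hx : x ≠ 0) (hxx : Q x x = 0) :
    (∃ c : ℝ, x = c • e) ∧ ∀ y : V, Q y e = 0 :=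
  stmt1_general Q hQsymm b e hpos hneg hnonneg hconn x hx hxx
end

section
/- Let V be a real vector space, Q a symmetric bilinear form on V, and e₁, …, eₙ elements of V. Set e = e₁ + ⋯ + eₙ. Then for any real numbers x₁, …, xₙ, setting x = x₁e₁ + ⋯ + xₙeₙ, one has Q(x, x) = Σᵢ xᵢ² Q(eᵢ, e) − Σ_{i<j} (xᵢ − xⱼ)² Q(eᵢ, eⱼ). -/
/-!
Split each double sum `∑ i, ∑ j` into its diagonal and the pairs `i < j`, folding the `j < i`
terms onto their mirror images. On the diagonal both sides agree, and on a pair `i < j`, by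
symmetry of `Q`, `xᵢ² Qᵢⱼ + xⱼ² Qⱼᵢ - (xᵢxⱼ Qᵢⱼ + xⱼxᵢ Qⱼᵢ) = (xᵢ - xⱼ)² Qᵢⱼ`.
-/

open Finset

theorem Finset.sum_sum_eq_sum_diag_add_sum_lt {ι M : Type*} [Fintype ι] [LinearOrder ι]
    [AddCommMonoid M] (f : ι → ι → M) :
    ∑ i, ∑ j, f i j = ∑ i, f i i + ∑ i, ∑ j, if i < j then f i j + f j i else 0 := by
  have hsplit : ∀ i j, f i j = ((if i = j then f i j else 0) + if i < j then f i j else 0) +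
      if j < i then f i j else 0 := by
    intro i j
    rcases lt_trichotomy i j with h | rfl | h
    · simp [h, h.ne, not_lt_of_gt h]
    · simp
    · simp [h, h.ne', not_lt_of_gt h]
  have hlower : ∑ i, ∑ j, (if j < i then f i j else 0) = ∑ i, ∑ j, if i < j then f j i else 0 :=
    sum_comm
  calc ∑ i, ∑ j, f i j
      = ∑ i, ∑ j, (((if i = j then f i j else 0) + if i < j then f i j else 0) +
          if j < i then f i j else 0) := by simp_rw [← hsplit]
    _ = ∑ i, f i i + ∑ i, ∑ j, ((if i < j then f i j else 0) + if i < j then f j i else 0) := by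
      simp only [sum_add_distrib, sum_ite_eq, mem_univ, if_true, hlower, add_assoc]
    _ = _ := by simp only [← ite_add_zero]

theorem sum_mul_mul_eq_sum_sq_mul_sum_sub {ι R : Type*} [Fintype ι] [LinearOrder ι]
    [CommRing R] (a : ι → ι → R) (ha : ∀ i j, a i j = a j i) (x : ι → R) :
    ∑ i, ∑ j, x i * x j * a i j =
      ∑ i, x i ^ 2 * ∑ j, a i j - ∑ i, ∑ j, if i < j then (x i - x j) ^ 2 * a i j else 0 := by
  simp_rw [mul_sum]
  rw [sum_sum_eq_sum_diag_add_sum_lt (fun i j => x i * x j * a i j),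
    sum_sum_eq_sum_diag_add_sum_lt (fun i j => x i ^ 2 * a i j), eq_sub_iff_add_eq, add_assoc,
    ← sum_add_distrib]
  congr 1
  · exact sum_congr rfl fun i _ => by ring
  · refine sum_congr rfl fun i _ => ?_
    rw [← sum_add_distrib]
    refine sum_congr rfl fun j _ => ?_
    split_ifs
    · rw [ha j i]
      ring
    · simp

/-- The quadratic-form identity
`Q(x,x) = ∑ᵢ xᵢ² Q(eᵢ, e) − ∑_{i<j} (xᵢ − xⱼ)² Q(eᵢ, eⱼ)` with `e = e₁ + ⋯ + eₙ`. -/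
theorem stmt2 {V : Type*} [AddCommGroup V] [Module ℝ V]
    (Q : V →ₗ[ℝ] V →ₗ[ℝ] ℝ) (hQsymm : ∀ x y, Q x y = Q y x)
    {n : ℕ} (e : Fin n → V) (x : Fin n → ℝ) :
    Q (∑ i, x i • e i) (∑ i, x i • e i) =
      (∑ i, (x i) ^ 2 * Q (e i) (∑ j, e j)) -
        ∑ i, ∑ j, (if i < j then (x i - x j) ^ 2 * Q (e i) (e j) else 0) := by
  have hexpand : Q (∑ i, x i • e i) (∑ i, x i • e i) = ∑ i, ∑ j, x i * x j * Q (e i) (e j) := by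
    rw [LinearMap.map_sum₂]
    simp only [map_sum, map_smul, LinearMap.smul_apply, smul_eq_mul]
    exact sum_congr rfl fun i _ => sum_congr rfl fun j _ => by ring
  rw [hexpand, sum_mul_mul_eq_sum_sq_mul_sum_sub (fun i j => Q (e i) (e j)) fun i j => hQsymm _ _]
  simp only [map_sum]
end

section
/- Let V be a real vector space, Q a symmetric bilinear form on V, and e₁, …, eₙ elements of V with e = e₁ + ⋯ + eₙ. Assume Q(eᵢ, eⱼ) ≥ 0 for all i ≠ j, and Q(e, eⱼ) ≤ 0 for all j. Then Q(x, x) ≤ 0 for every x in the linear span of e₁, …, eₙ, i.e. Q(Σᵢ xᵢeᵢ, Σᵢ xᵢeᵢ) ≤ 0 for all real numbers x₁, …, xₙ. -/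
open Finset

/-- Linear-algebra core of Proposition 5.3: if `Q(eᵢ,eⱼ) ≥ 0` for `i ≠ j` and
`Q(e, eⱼ) ≤ 0` for all `j` where `e = e₁ + ⋯ + eₙ`, then `Q` is negative semi-definite
on the span of the `eᵢ`. -/
theorem stmt3 {V : Type*} [AddCommGroup V] [Module ℝ V]
    (Q : V →ₗ[ℝ] V →ₗ[ℝ] ℝ) (hQsymm : ∀ x y, Q x y = Q y x)
    {n : ℕ} (e : Fin n → V)
    (h1 : ∀ i j : Fin n, i ≠ j → 0 ≤ Q (e i) (e j))
    (h2 : ∀ j : Fin n, Q (∑ i, e i) (e j) ≤ 0) :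
    ∀ x : Fin n → ℝ, Q (∑ i, x i • e i) (∑ i, x i • e i) ≤ 0 := by
  intro x
  set q : Fin n → Fin n → ℝ := fun i j => Q (e i) (e j) with hq
  have hsym : ∀ i j, q i j = q j i := fun i j => hQsymm _ _
  have hexp : Q (∑ i, x i • e i) (∑ i, x i • e i) = ∑ i, ∑ j, x i * x j * q i j := by
    simp only [map_sum, LinearMap.sum_apply, map_smul, LinearMap.smul_apply, smul_eq_mul, q]
    refine Finset.sum_congr rfl fun i _ => ?_
    rw [Finset.mul_sum]
    refine Finset.sum_congr rfl fun j _ => ?_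
    rw [hQsymm (e j) (e i)]; ring
  rw [hexp]
  have hS : ∀ i, ∑ j, q j i ≤ 0 := by
    intro i
    have := h2 i
    simpa [q, map_sum] using this
  have hS' : ∀ i, ∑ j, q i j ≤ 0 := by
    intro i
    calc ∑ j, q i j = ∑ j, q j i := Finset.sum_congr rfl fun j _ => hsym i j
    _ ≤ 0 := hS i
  have swap : ∑ i, ∑ j, (x j)^2 * q i j = ∑ i, (x i)^2 * ∑ j, q i j := by
    rw [Finset.sum_comm]
    refine Finset.sum_congr rfl fun j _ => ?_
    rw [Finset.mul_sum]
    exact Finset.sum_congr rfl fun i _ => by rw [hsym]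
  have key : 2 * (∑ i, ∑ j, x i * x j * q i j)
      = 2 * (∑ i, (x i)^2 * ∑ j, q i j) - ∑ i, ∑ j, q i j * (x i - x j)^2 := by
    have expand : ∀ i j : Fin n,
        2 * (x i * x j * q i j)
          = ((x i)^2 * q i j + (x j)^2 * q i j) - q i j * (x i - x j)^2 := by
      intro i j; ring
    calc 2 * (∑ i, ∑ j, x i * x j * q i j)
        = ∑ i, ∑ j, 2 * (x i * x j * q i j) := by
          rw [Finset.mul_sum]; exact Finset.sum_congr rfl fun i _ => (Finset.mul_sum ..)
      _ = ∑ i, ∑ j, (((x i)^2 * q i j + (x j)^2 * q i j) - q i j * (x i - x j)^2) := by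
          exact Finset.sum_congr rfl fun i _ => Finset.sum_congr rfl fun j _ => expand i j
      _ = (∑ i, (x i)^2 * ∑ j, q i j) + (∑ i, ∑ j, (x j)^2 * q i j)
            - ∑ i, ∑ j, q i j * (x i - x j)^2 := by
          simp [Finset.sum_add_distrib, Finset.sum_sub_distrib, Finset.mul_sum]
      _ = 2 * (∑ i, (x i)^2 * ∑ j, q i j) - ∑ i, ∑ j, q i j * (x i - x j)^2 := by
          rw [swap]; ring
  have h3 : ∑ i, (x i)^2 * ∑ j, q i j ≤ 0 := by
    apply Finset.sum_nonpos
    intro i _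
    exact mul_nonpos_of_nonneg_of_nonpos (sq_nonneg _) (hS' i)
  have h4 : 0 ≤ ∑ i, ∑ j, q i j * (x i - x j)^2 := by
    apply Finset.sum_nonneg; intro i _
    apply Finset.sum_nonneg; intro j _
    rcases eq_or_ne i j with rfl | hij
    · simp
    · exact mul_nonneg (h1 i j hij) (sq_nonneg _)
  linarith
end

section
/- Let V be a real vector space, B a symmetric bilinear form on V, and d : V → ℝ a linear functional. Assume the Hodge-index property: for every z ∈ V with d(z) = 0, one has B(z, z) ≤ 0. Then for all x, y ∈ V with B(x, x) > 0, d(x) > 0, B(y, y) > 0 and d(y) > 0, one has B(x, y) > 0. -/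
/-- Abstract form of Proposition 5.1: under the Hodge-index property, two classes with
positive self-intersection and positive degree pair positively. -/
theorem stmt7 {V : Type*} [AddCommGroup V] [Module ℝ V]
    (B : V →ₗ[ℝ] V →ₗ[ℝ] ℝ) (hBsymm : ∀ x y, B x y = B y x)
    (d : V →ₗ[ℝ] ℝ)
    (hodge : ∀ z : V, d z = 0 → B z z ≤ 0) :
    ∀ x y : V, 0 < B x x → 0 < d x → 0 < B y y → 0 < d y → 0 < B x y := by
  intro x y hxx hdx hyy hdy
  have hz : d (d y • x - d x • y) = 0 := by
    simp [mul_comm]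
  have hB := hodge _ hz
  have hexp : B (d y • x - d x • y) (d y • x - d x • y)
      = d y * d y * B x x - 2 * (d y * d x) * B x y + d x * d x * B y y := by
    simp [map_sub, map_smul, hBsymm y x]
    ring
  rw [hexp] at hB
  nlinarith [mul_pos hdx hdy, mul_pos hxx hyy, mul_pos (mul_pos hdy hdy) hxx,
    mul_pos (mul_pos hdx hdx) hyy]
end
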